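/- Let w and w′ be nonempty strings over Σ, let D be a right context-insensitive decomposition of w, and let D′ be a left context-insensitive decomposition of w′. Then the concatenation D·D′ is a decomposition of w·w′. Moreover, if D and D′ are both context-insensitive, then D·D′ is a context-insensitive decomposition of w·w′. -/

import Mathlib

namespace DynStr

/-- The set `𝒮` of symbols over the alphabet `α`:
base letters, pairing symbols `(S₁,S₂)` and power symbols `(S,k)`. -/
inductive Sym (α : Type) : Type where
  | base : α → Sym α
  | pair : Sym α → Sym α → Sym α
  | pow  : Sym α → ℕ → Sym α
deriving DecidableEq

variable {α : Type} [DecidableEq α]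

/-- The string over `Σ` generated by a symbol. -/
def strSym : Sym α → List α
  | .base a => [a]
  | .pair s t => strSym s ++ strSym t
  | .pow s k => (List.replicate k (strSym s)).flatten

/-- Run-length pairs: the maximal blocks of equal elements, with multiplicities. -/
def runs {β : Type} [DecidableEq β] : List β → List (β × ℕ)
  | [] => []
  | a :: l =>
    match runs l with
    | [] => [(a, 1)]
    | (b, k) :: rest => if a = b then (b, k + 1) :: rest else (a, 1) :: (b, k) :: rest

/-- `|RLE(w)|`: the number of blocks in the run-length encoding of `w`. -/
def rleLen {β : Type} [DecidableEq β] (w : List β) : ℕ := (runs w).length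

/-- The `Rle` function: replace every maximal block `S^k` with `k ≥ 2` by `(S,k)`. -/
def rle : List (Sym α) → List (Sym α) :=
  fun w => (runs w).map fun p => if 2 ≤ p.2 then Sym.pow p.1 p.2 else p.1

/-- `Compressᵢ` with bit function `g`: replace every (disjoint, greedily-from-the-left
determined, i.e. uniquely determined) adjacent pair `S S'` with `g S = 0`, `g S' = 1`
by the symbol `(S,S')`. -/
def compress (g : Sym α → Bool) : List (Sym α) → List (Sym α)
  | [] => []
  | [a] => [a]
  | a :: b :: l =>
    if g a = false ∧ g b = true then Sym.pair a b :: compress g l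
    else a :: compress g (b :: l)

/-- `shrinkᵢ` (for `i ≥ 1`): `Rle` for odd `i`, `Compress_{i/2}` for even `i`. -/
def shrinkStep (h : ℕ → Sym α → Bool) (i : ℕ) (w : List (Sym α)) : List (Sym α) :=
  if i % 2 = 1 then rle w else compress (h (i / 2)) w

/-- `shrink^i`, the iterated parsing function. -/
def shrinkIter (h : ℕ → Sym α → Bool) : ℕ → List (Sym α) → List (Sym α)
  | 0, w => w
  | i + 1, w => shrinkStep h (i + 1) (shrinkIter h i w)

/-- `Depth(w)`: the least `i` with `|shrink^i(w)| = 1`. -/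
noncomputable def depth (h : ℕ → Sym α → Bool) (w : List (Sym α)) : ℕ :=
  sInf {i | (shrinkIter h i w).length = 1}

/-- A string over `Σ` viewed as a string of (base) symbols. -/
def embed (w : List α) : List (Sym α) := w.map Sym.base

/-- Sizes of the blocks formed by `Compress` with bit function `g`. -/
def compBlocks (g : Sym α → Bool) : List (Sym α) → List ℕ
  | [] => []
  | [_] => [1]
  | a :: b :: l =>
    if g a = false ∧ g b = true then 2 :: compBlocks g l
    else 1 :: compBlocks g (b :: l)

/-- Sizes of the blocks formed by `shrinkᵢ`. -/
def stepBlocks (h : ℕ → Sym α → Bool) (i : ℕ) (w : List (Sym α)) : List ℕ :=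
  if i % 2 = 1 then (runs w).map Prod.snd else compBlocks (h (i / 2)) w

/-- Sizes of the blocks formed when passing from level `l` to level `l+1` of the
uncompressed parse tree of `w`. -/
def blocksAt (h : ℕ → Sym α → Bool) (w : List (Sym α)) (l : ℕ) : List ℕ :=
  stepBlocks h (l + 1) (shrinkIter h l w)

/-- Index of the block (in a list of block sizes) containing position `j`. -/
def blockOf : List ℕ → ℕ → ℕ
  | [], _ => 0
  | b :: bs, j => if j < b then 0 else blockOf bs (j - b) + 1

/-- A node of the uncompressed parse tree `T̄(w)`: the `idx`-th symbol occurrence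
(0-indexed) of `shrink^level(w)`. -/
structure TNode where
  level : ℕ
  idx : ℕ
deriving DecidableEq

/-- `v` is an actual node of `T̄(w)`. -/
def IsNode (h : ℕ → Sym α → Bool) (w : List (Sym α)) (v : TNode) : Prop :=
  v.level ≤ depth h w ∧ v.idx < (shrinkIter h v.level w).length

/-- The signature (symbol) of a node. -/
def sigAt (h : ℕ → Sym α → Bool) (w : List (Sym α)) (v : TNode) : Option (Sym α) :=
  (shrinkIter h v.level w)[v.idx]?

/-- Index in `w` (i.e. on level 0) of the first position below the `j`-th symbol of
`shrink^l(w)`. -/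
def startIdx (h : ℕ → Sym α → Bool) (w : List (Sym α)) : ℕ → ℕ → ℕ
  | 0, j => j
  | l + 1, j => startIdx h w l (((blocksAt h w l).take j).sum)

/-- The first level-0 position of the fragment represented by `v`. -/
def begIdx (h : ℕ → Sym α → Bool) (w : List (Sym α)) (v : TNode) : ℕ :=
  startIdx h w v.level v.idx

/-- One past the last level-0 position of the fragment represented by `v`. -/
def endIdx (h : ℕ → Sym α → Bool) (w : List (Sym α)) (v : TNode) : ℕ :=
  startIdx h w v.level (v.idx + 1)

/-- `par(v)`. -/
def parNode (h : ℕ → Sym α → Bool) (w : List (Sym α)) (v : TNode) : TNode :=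
  ⟨v.level + 1, blockOf (blocksAt h w v.level) v.idx⟩

/-- The parent of `v` exists in `T̄(w)`. -/
def HasPar (h : ℕ → Sym α → Bool) (w : List (Sym α)) (v : TNode) : Prop :=
  IsNode h w v ∧ v.level < depth h w

/-- The number of children of `v` (for `v.level ≥ 1`). -/
def degree (h : ℕ → Sym α → Bool) (w : List (Sym α)) (v : TNode) : ℕ :=
  (blocksAt h w (v.level - 1)).getD v.idx 0

/-- `child(v,k)`, the `k`-th child of `v` (`k` is 1-indexed). -/
def childNode (h : ℕ → Sym α → Bool) (w : List (Sym α)) (v : TNode) (k : ℕ) : TNode :=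
  ⟨v.level - 1, ((blocksAt h w (v.level - 1)).take v.idx).sum + (k - 1)⟩

/-- The `k`-th child of `v` exists in `T̄(w)`. -/
def HasChild (h : ℕ → Sym α → Bool) (w : List (Sym α)) (v : TNode) (k : ℕ) : Prop :=
  IsNode h w v ∧ 1 ≤ v.level ∧ 1 ≤ k ∧ k ≤ degree h w v

/-- `left(v)`. -/
def leftNode (v : TNode) : TNode := ⟨v.level, v.idx - 1⟩

/-- `right(v)`. -/
def rightNode (v : TNode) : TNode := ⟨v.level, v.idx + 1⟩

/-- `left(v)` exists in `T̄(w)`. -/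
def HasLeft (h : ℕ → Sym α → Bool) (w : List (Sym α)) (v : TNode) : Prop :=
  IsNode h w v ∧ 1 ≤ v.idx

/-- `right(v)` exists in `T̄(w)`. -/
def HasRight (h : ℕ → Sym α → Bool) (w : List (Sym α)) (v : TNode) : Prop :=
  IsNode h w v ∧ v.idx + 1 < (shrinkIter h v.level w).length

/-- `v'` is the counterpart (`v ≈ v'`) of the node `v` of `T̄(w)` with respect to the
extension `x·w·y`: a node of `T̄(xwy)` of the same level with the same signature,
representing the fragment of `xwy` naturally corresponding to the fragment of `w`
represented by `v`. -/
def Counterpart (h : ℕ → Sym α → Bool) (x w y : List α) (v v' : TNode) : Prop :=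
  IsNode h (embed (x ++ w ++ y)) v' ∧
  v'.level = v.level ∧
  sigAt h (embed (x ++ w ++ y)) v' = sigAt h (embed w) v ∧
  begIdx h (embed (x ++ w ++ y)) v' = x.length + begIdx h (embed w) v ∧
  endIdx h (embed (x ++ w ++ y)) v' = x.length + endIdx h (embed w) v

/-- `v` is preserved in the extension `x·w·y`. -/
def Preserved (h : ℕ → Sym α → Bool) (x w y : List α) (v : TNode) : Prop :=
  ∃ v', Counterpart h x w y v v'

/-- `v` is right context-insensitive: preserved in every right extension. -/
def RightCI (h : ℕ → Sym α → Bool) (w : List α) (v : TNode) : Prop :=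
  ∀ y : List α, Preserved h [] w y v

/-- `v` is left context-insensitive: preserved in every left extension. -/
def LeftCI (h : ℕ → Sym α → Bool) (w : List α) (v : TNode) : Prop :=
  ∀ x : List α, Preserved h x w [] v

/-- `v` is context-insensitive: preserved in every extension. -/
def ContextIns (h : ℕ → Sym α → Bool) (w : List α) (v : TNode) : Prop :=
  ∀ x y : List α, Preserved h x w y v

/-- `u` is a (not necessarily proper) ancestor of `v` in `T̄(w)`. -/
def Ancestor (h : ℕ → Sym α → Bool) (w : List (Sym α)) (u v : TNode) : Prop :=
  v.level ≤ u.level ∧ begIdx h w u ≤ begIdx h w v ∧ endIdx h w v ≤ endIdx h w u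

/-- `u` is a proper ancestor of `v`. -/
def ProperAnc (h : ℕ → Sym α → Bool) (w : List (Sym α)) (u v : TNode) : Prop :=
  Ancestor h w u v ∧ u ≠ v

/-- The fragments of the listed nodes tile `w[a..]` consecutively from left to right. -/
def chainFrom (h : ℕ → Sym α → Bool) (w : List (Sym α)) : ℕ → List TNode → Prop
  | a, [] => a = w.length
  | a, v :: L => begIdx h w v = a ∧ chainFrom h w (endIdx h w v) L

/-- `L` is a layer of the uncompressed parse tree `T̄(w)`, listed from left to right:
every leaf has exactly one ancestor in `L` (equivalently, the fragments of
the nodes of `L` tile `w`). -/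
def IsBarLayer (h : ℕ → Sym α → Bool) (w : List (Sym α)) (L : List TNode) : Prop :=
  (∀ v ∈ L, IsNode h w v) ∧ chainFrom h w 0 L

/-- `v` is a node of the compressed parse tree `T(w)` (obtained from `T̄(w)` by
dissolving nodes with exactly one child). -/
def InCompTree (h : ℕ → Sym α → Bool) (w : List (Sym α)) (v : TNode) : Prop :=
  IsNode h w v ∧ (v.level = 0 ∨ 2 ≤ degree h w v)

/-- `L` is a layer of the compressed parse tree `T(w)`, listed from left to right. -/
def IsCompLayer (h : ℕ → Sym α → Bool) (w : List (Sym α)) (L : List TNode) : Prop :=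
  (∀ v ∈ L, InCompTree h w v) ∧ chainFrom h w 0 L

/-- `u` is the parent of `v` in the compressed parse tree `T(w)`:
the nearest proper ancestor of `v` that is a node of `T(w)`. -/
def CompParent (h : ℕ → Sym α → Bool) (w : List (Sym α)) (u v : TNode) : Prop :=
  InCompTree h w u ∧ InCompTree h w v ∧ ProperAnc h w u v ∧
  ∀ z, InCompTree h w z → ProperAnc h w z v → Ancestor h w z u

/-- `D` is the decomposition of `w` corresponding to the layer `L` of `T̄(w)`. -/
def IsDecompOf (h : ℕ → Sym α → Bool) (w : List α) (D : List (Sym α)) (L : List TNode) : Prop :=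
  IsBarLayer h (embed w) L ∧ L.map (sigAt h (embed w)) = D.map some

/-- `D` is a decomposition of `w`. -/
def IsDecomp (h : ℕ → Sym α → Bool) (w : List α) (D : List (Sym α)) : Prop :=
  ∃ L, IsDecompOf h w D L

/-- `D` is a context-insensitive decomposition of `w`. -/
def IsCIDecomp (h : ℕ → Sym α → Bool) (w : List α) (D : List (Sym α)) : Prop :=
  ∃ L, IsDecompOf h w D L ∧ ∀ v ∈ L, ContextIns h w v

/-- `D` is a right context-insensitive decomposition of `w`. -/
def IsRightCIDecomp (h : ℕ → Sym α → Bool) (w : List α) (D : List (Sym α)) : Prop :=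
  ∃ L, IsDecompOf h w D L ∧ ∀ v ∈ L, RightCI h w v

/-- `D` is a left context-insensitive decomposition of `w`. -/
def IsLeftCIDecomp (h : ℕ → Sym α → Bool) (w : List α) (D : List (Sym α)) : Prop :=
  ∃ L, IsDecompOf h w D L ∧ ∀ v ∈ L, LeftCI h w v

/-- The level of a symbol. -/
noncomputable def symLevel (h : ℕ → Sym α → Bool) : Sym α → ℕ
  | .base _ => 0
  | .pow s _ => symLevel h s + 1
  | .pair s t =>
      sInf {l | l % 2 = 0 ∧ max (symLevel h s) (symLevel h t) < l ∧
                h (l / 2) s = false ∧ h (l / 2) t = true}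

/-- `S` is a consistent symbol: it occurs in `shrink^i(w)` for some nonempty `w ∈ Σ⁺`. -/
def Consistent (h : ℕ → Sym α → Bool) (S : Sym α) : Prop :=
  ∃ (w : List α) (i : ℕ), w ≠ [] ∧ S ∈ shrinkIter h i (embed w)

/-- Longest common prefix of two lists. -/
def lcp {β : Type} [DecidableEq β] : List β → List β → List β
  | a :: l, b :: m => if a = b then a :: lcp l m else []
  | _, _ => []

end DynStr
namespace DynStr

variable {α : Type} [DecidableEq α]

/-- Auxiliary: the fragments of the listed nodes tile `W[a..b)`. -/
def chainSeg (h : ℕ → Sym α → Bool) (W : List (Sym α)) : ℕ → ℕ → List TNode → Prop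
  | a, b, [] => a = b
  | a, b, v :: L => begIdx h W v = a ∧ chainSeg h W (endIdx h W v) b L

lemma chainFrom_iff_chainSeg (h : ℕ → Sym α → Bool) (W : List (Sym α)) :
    ∀ (L : List TNode) (a : ℕ), chainFrom h W a L ↔ chainSeg h W a W.length L
  | [], a => Iff.rfl
  | v :: L, a => by
    simp only [chainFrom, chainSeg, chainFrom_iff_chainSeg h W L]

lemma chainSeg_append {h : ℕ → Sym α → Bool} {W : List (Sym α)} {b c : ℕ}
    {L₁ L₂ : List TNode} :
    ∀ {a : ℕ}, chainSeg h W a b L₁ → chainSeg h W b c L₂ →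
      chainSeg h W a c (L₁ ++ L₂) := by
  induction L₁ with
  | nil => intro a h1 h2; cases h1; exact h2
  | cons v L ih => intro a h1 h2; exact ⟨h1.1, ih h1.2 h2⟩

lemma exists_forall₂ {β γ : Type} {R : β → γ → Prop} :
    ∀ (L : List β), (∀ v ∈ L, ∃ v', R v v') → ∃ L', List.Forall₂ R L L'
  | [], _ => ⟨[], .nil⟩
  | v :: L, H => by
    obtain ⟨v', hv'⟩ := H v (List.mem_cons_self (a := v) (l := L))
    obtain ⟨L', hL'⟩ := exists_forall₂ L (fun u hu => H u (List.mem_cons_of_mem _ hu))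
    exact ⟨v' :: L', .cons hv' hL'⟩

lemma forall₂_mem_right {β γ : Type} {R : β → γ → Prop} {L : List β} {L' : List γ}
    (hF : List.Forall₂ R L L') : ∀ v' ∈ L', ∃ v ∈ L, R v v' := by
  induction hF with
  | nil => simp
  | cons h1 _ ih =>
    intro v' hv'
    rcases List.mem_cons.mp hv' with rfl | hv'
    · exact ⟨_, List.mem_cons_self, h1⟩
    · obtain ⟨v, hv, hR⟩ := ih v' hv'
      exact ⟨v, List.mem_cons_of_mem _ hv, hR⟩

lemma map_eq_of_forall₂ {β γ δ : Type} {R : β → γ → Prop} {L : List β} {L' : List γ}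
    {f : β → δ} {g : γ → δ} (hF : List.Forall₂ R L L')
    (hfg : ∀ v v', R v v' → g v' = f v) : L'.map g = L.map f := by
  induction hF with
  | nil => rfl
  | cons h1 _ ih => simp [ih, hfg _ _ h1]

lemma chainSeg_of_forall₂ {h : ℕ → Sym α → Bool} {W W' : List (Sym α)} {c : ℕ}
    {R : TNode → TNode → Prop} {L L' : List TNode}
    (hR : ∀ v v', R v v' →
      begIdx h W' v' = c + begIdx h W v ∧ endIdx h W' v' = c + endIdx h W v)
    (hF : List.Forall₂ R L L') :
    ∀ {a b : ℕ}, chainSeg h W a b L → chainSeg h W' (c + a) (c + b) L' := by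
  induction hF with
  | nil => intro a b hab; cases hab; rfl
  | cons h1 _ ih =>
    intro a b hab
    refine ⟨?_, ?_⟩
    · rw [(hR _ _ h1).1, hab.1]
    · rw [(hR _ _ h1).2]; exact ih hab.2

/-- The core construction: counterparts of the two layers concatenate to a layer
of `w ++ w'` yielding the decomposition `D ++ D'`. -/
lemma construct (h : ℕ → Sym α → Bool) (w w' : List α)
    {D D' : List (Sym α)} {L₁ L₂ L₁' L₂' : List TNode}
    (hd₁ : IsDecompOf h w D L₁) (hd₂ : IsDecompOf h w' D' L₂)
    (hF₁ : List.Forall₂ (Counterpart h [] w w') L₁ L₁')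
    (hF₂ : List.Forall₂ (Counterpart h w w' []) L₂ L₂') :
    IsDecompOf h (w ++ w') (D ++ D') (L₁' ++ L₂') := by
  have e₁ : embed ([] ++ w ++ w') = embed (w ++ w') := by simp
  have e₂ : embed (w ++ w' ++ []) = embed (w ++ w') := by simp
  have key₁ : ∀ v v', Counterpart h [] w w' v v' →
      begIdx h (embed (w ++ w')) v' = 0 + begIdx h (embed w) v ∧
      endIdx h (embed (w ++ w')) v' = 0 + endIdx h (embed w) v := by
    intro v v' hc
    rw [← e₁]
    exact ⟨by simpa using hc.2.2.2.1, by simpa using hc.2.2.2.2⟩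
  have key₂ : ∀ v v', Counterpart h w w' [] v v' →
      begIdx h (embed (w ++ w')) v' = w.length + begIdx h (embed w') v ∧
      endIdx h (embed (w ++ w')) v' = w.length + endIdx h (embed w') v := by
    intro v v' hc
    rw [← e₂]
    exact ⟨hc.2.2.2.1, hc.2.2.2.2⟩
  constructor
  · constructor
    · intro v' hv'
      rcases List.mem_append.mp hv' with hv' | hv'
      · obtain ⟨v, _, hR⟩ := forall₂_mem_right hF₁ v' hv'
        have := hR.1; rwa [e₁] at this
      · obtain ⟨v, _, hR⟩ := forall₂_mem_right hF₂ v' hv'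
        have := hR.1; rwa [e₂] at this
    · rw [chainFrom_iff_chainSeg]
      have len : (embed (w ++ w')).length = w.length + w'.length := by
        simp [embed]
      rw [len]
      have c₁ : chainSeg h (embed w) 0 w.length L₁ := by
        have := hd₁.1.2
        rw [chainFrom_iff_chainSeg] at this
        simpa [embed] using this
      have c₂ : chainSeg h (embed w') 0 w'.length L₂ := by
        have := hd₂.1.2
        rw [chainFrom_iff_chainSeg] at this
        simpa [embed] using this
      have s₁ : chainSeg h (embed (w ++ w')) (0 + 0) (0 + w.length) L₁' :=
        chainSeg_of_forall₂ key₁ hF₁ c₁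
      have s₂ : chainSeg h (embed (w ++ w')) (w.length + 0) (w.length + w'.length) L₂' :=
        chainSeg_of_forall₂ key₂ hF₂ c₂
      simp only [Nat.zero_add, Nat.add_zero] at s₁ s₂
      exact chainSeg_append s₁ s₂
  · have m₁ : L₁'.map (sigAt h (embed (w ++ w'))) = L₁.map (sigAt h (embed w)) :=
      map_eq_of_forall₂ hF₁ (fun v v' hc => by rw [← e₁]; exact hc.2.2.1)
    have m₂ : L₂'.map (sigAt h (embed (w ++ w'))) = L₂.map (sigAt h (embed w')) :=
      map_eq_of_forall₂ hF₂ (fun v v' hc => by rw [← e₂]; exact hc.2.2.1)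
    rw [List.map_append, List.map_append, m₁, m₂, hd₁.2, hd₂.2]

/-- A counterpart (w.r.t. the right extension by `w'`) of a context-insensitive node
of `w` is context-insensitive in `w ++ w'`. -/
lemma rightLift {h : ℕ → Sym α → Bool} {w w' : List α} {v v' : TNode}
    (hc : Counterpart h [] w w' v v') (hci : ContextIns h w v) :
    ContextIns h (w ++ w') v' := by
  intro x y
  obtain ⟨v'', hc'⟩ := hci x (w' ++ y)
  have eL : embed (x ++ w ++ (w' ++ y)) = embed (x ++ (w ++ w') ++ y) := by
    simp [List.append_assoc]
  have e₁ : embed ([] ++ w ++ w') = embed (w ++ w') := by simp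
  refine ⟨v'', ?_, ?_, ?_, ?_, ?_⟩
  · rw [← eL]; exact hc'.1
  · rw [hc'.2.1, hc.2.1]
  · rw [← eL, hc'.2.2.1, ← hc.2.2.1, e₁]
  · rw [← eL, hc'.2.2.2.1]
    have : begIdx h (embed (w ++ w')) v' = begIdx h (embed w) v := by
      rw [← e₁]; simpa using hc.2.2.2.1
    rw [this]
  · rw [← eL, hc'.2.2.2.2]
    have : endIdx h (embed (w ++ w')) v' = endIdx h (embed w) v := by
      rw [← e₁]; simpa using hc.2.2.2.2
    rw [this]

/-- A counterpart (w.r.t. the left extension by `w`) of a context-insensitive node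
of `w'` is context-insensitive in `w ++ w'`. -/
lemma leftLift {h : ℕ → Sym α → Bool} {w w' : List α} {v v' : TNode}
    (hc : Counterpart h w w' [] v v') (hci : ContextIns h w' v) :
    ContextIns h (w ++ w') v' := by
  intro x y
  obtain ⟨v'', hc'⟩ := hci (x ++ w) y
  have eL : embed (x ++ w ++ w' ++ y) = embed (x ++ (w ++ w') ++ y) := by
    simp [List.append_assoc]
  have e₂ : embed (w ++ w' ++ []) = embed (w ++ w') := by simp
  have hb : begIdx h (embed (w ++ w')) v' = w.length + begIdx h (embed w') v := by
    rw [← e₂]; exact hc.2.2.2.1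
  have he : endIdx h (embed (w ++ w')) v' = w.length + endIdx h (embed w') v := by
    rw [← e₂]; exact hc.2.2.2.2
  refine ⟨v'', ?_, ?_, ?_, ?_, ?_⟩
  · rw [← eL]; exact hc'.1
  · rw [hc'.2.1, hc.2.1]
  · rw [← eL, hc'.2.2.1, ← hc.2.2.1, e₂]
  · rw [← eL, hc'.2.2.2.1, hb, List.length_append]; ring
  · rw [← eL, hc'.2.2.2.2, he, List.length_append]; ring

/-- If `D` is a right context-insensitive decomposition of `w` and `D'`
is a left context-insensitive decomposition of `w'`, then `D·D'` is a decomposition of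
`w·w'`; moreover if `D` and `D'` are context-insensitive then so is `D·D'`. -/
theorem two_decompositions
    {α : Type} [DecidableEq α] (h : ℕ → Sym α → Bool)
    (w w' : List α) (hw : w ≠ []) (hw' : w' ≠ [])
    (D D' : List (Sym α))
    (hD : IsRightCIDecomp h w D) (hD' : IsLeftCIDecomp h w' D') :
    IsDecomp h (w ++ w') (D ++ D') ∧
    (IsCIDecomp h w D → IsCIDecomp h w' D' → IsCIDecomp h (w ++ w') (D ++ D')) := by
  constructor
  · obtain ⟨L₁, hd₁, hR₁⟩ := hD
    obtain ⟨L₂, hd₂, hL₂⟩ := hD'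
    obtain ⟨L₁', hF₁⟩ := exists_forall₂ (R := Counterpart h [] w w') L₁
      (fun v hv => hR₁ v hv w')
    obtain ⟨L₂', hF₂⟩ := exists_forall₂ (R := Counterpart h w w' []) L₂
      (fun v hv => hL₂ v hv w)
    exact ⟨L₁' ++ L₂', construct h w w' hd₁ hd₂ hF₁ hF₂⟩
  · rintro ⟨L₁, hd₁, hC₁⟩ ⟨L₂, hd₂, hC₂⟩
    obtain ⟨L₁', hF₁⟩ := exists_forall₂
      (R := fun v v' => Counterpart h [] w w' v v' ∧ ContextIns h (w ++ w') v') L₁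
      (fun v hv => by
        obtain ⟨v', hv'⟩ := hC₁ v hv [] w'
        exact ⟨v', hv', rightLift hv' (hC₁ v hv)⟩)
    obtain ⟨L₂', hF₂⟩ := exists_forall₂
      (R := fun v v' => Counterpart h w w' [] v v' ∧ ContextIns h (w ++ w') v') L₂
      (fun v hv => by
        obtain ⟨v', hv'⟩ := hC₂ v hv w []
        exact ⟨v', hv', leftLift hv' (hC₂ v hv)⟩)
    refine ⟨L₁' ++ L₂',
      construct h w w' hd₁ hd₂ (hF₁.imp fun _ _ hp => hp.1) (hF₂.imp fun _ _ hp => hp.1), ?_⟩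
    intro v' hv'
    rcases List.mem_append.mp hv' with hv' | hv'
    · obtain ⟨v, _, hR⟩ := forall₂_mem_right hF₁ v' hv'
      exact hR.2
    · obtain ⟨v, _, hR⟩ := forall₂_mem_right hF₂ v' hv'
      exact hR.2

end DynStr
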